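/- arXiv:math/9912170 — 2 statements merged into one kernel-verified Lean document; each statement's English description precedes it below -/
import Mathlib

section
/- For every real y > 0, H(y) > 0, where H(y) = 4y² ∑_{n=1}^∞ (2π²n⁴y² − 3πn²) exp(−πn²y²). -/
open Real

/-- `c n = π (n+1)²`. -/
private noncomputable def c (n : ℕ) : ℝ := Real.pi * ((n : ℝ) + 1) ^ 2

private lemma c_pos (n : ℕ) : 0 < c n := by
  have := Real.pi_pos
  have h : (0:ℝ) < ((n : ℝ) + 1) ^ 2 := by positivity
  exact mul_pos this h

private lemma c_ge3 (n : ℕ) : 3 ≤ c n := by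
  have hpi := Real.pi_gt_three
  have hn : (0:ℝ) ≤ (n : ℝ) := n.cast_nonneg
  simp only [c]
  nlinarith

/-- `W k t = ∑ (c n)^k exp (-c n t)`. -/
private noncomputable def W (k : ℕ) (t : ℝ) : ℝ :=
  ∑' n : ℕ, c n ^ k * Real.exp (-c n * t)

private lemma summable_W (k : ℕ) {t : ℝ} (ht : 0 < t) :
    Summable (fun n : ℕ => c n ^ k * Real.exp (-c n * t)) := by
  have hr1 : ‖Real.exp (-(Real.pi * t))‖ < 1 := by
    rw [Real.norm_eq_abs, abs_of_pos (Real.exp_pos _), ← Real.exp_zero]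
    exact Real.exp_lt_exp.2 (by nlinarith [Real.pi_pos])
  have base : Summable (fun n : ℕ => (n : ℝ) ^ (2 * k) * Real.exp (-(Real.pi * t)) ^ n) :=
    summable_pow_mul_geometric_of_norm_lt_one (2 * k) hr1
  have base1 : Summable (fun n : ℕ =>
      ((n : ℝ) + 1) ^ (2 * k) * Real.exp (-(Real.pi * t)) ^ (n + 1)) := by
    have h := (summable_nat_add_iff 1).mpr base
    refine h.congr fun n => ?_
    push_cast
    ring
  refine Summable.of_nonneg_of_le
    (fun n => mul_nonneg (pow_nonneg (c_pos n).le k) (Real.exp_pos _).le) (fun n => ?_)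
    (base1.mul_left (Real.pi ^ k))
  have hcn : c n ^ k = Real.pi ^ k * ((n : ℝ) + 1) ^ (2 * k) := by
    rw [c, mul_pow, pow_mul]
  have hexp : Real.exp (-c n * t) ≤ Real.exp (-(Real.pi * t)) ^ (n + 1) := by
    rw [← Real.exp_nat_mul]
    apply Real.exp_le_exp.2
    have hn : (0:ℝ) ≤ (n : ℝ) := n.cast_nonneg
    have hpi := Real.pi_pos
    simp only [c]
    push_cast
    nlinarith [mul_pos hpi ht, mul_nonneg (mul_nonneg hpi.le ht.le) hn,
      mul_nonneg (mul_nonneg (mul_nonneg hpi.le ht.le) hn) hn]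
  calc c n ^ k * Real.exp (-c n * t)
      = Real.pi ^ k * (((n : ℝ) + 1) ^ (2 * k) * Real.exp (-c n * t)) := by rw [hcn]; ring
    _ ≤ Real.pi ^ k * (((n : ℝ) + 1) ^ (2 * k) * Real.exp (-(Real.pi * t)) ^ (n + 1)) := by
        have h1 : (0:ℝ) ≤ ((n : ℝ) + 1) ^ (2 * k) := by positivity
        have h2 : (0:ℝ) ≤ Real.pi ^ k := by positivity
        exact mul_le_mul_of_nonneg_left (mul_le_mul_of_nonneg_left hexp h1) h2

private lemma myHasDerivAt_tsum {g g' : ℕ → ℝ → ℝ} {u : ℕ → ℝ} {s : Set ℝ} {y₀ y : ℝ}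
    (hu : Summable u) (hs : IsOpen s) (h's : IsPreconnected s)
    (hg : ∀ n x, x ∈ s → HasDerivAt (g n) (g' n x) x)
    (hg' : ∀ n x, x ∈ s → ‖g' n x‖ ≤ u n) (hy₀ : y₀ ∈ s)
    (hg0 : Summable fun n => g n y₀) (hy : y ∈ s) :
    HasDerivAt (fun z => ∑' n, g n z) (∑' n, g' n y) y :=
  hasDerivAt_tsum_of_isPreconnected hu hs h's hg hg' hy₀ hg0 hy

private lemma hasDerivAt_W (k : ℕ) {t : ℝ} (ht : 0 < t) :
    HasDerivAt (W k) (-W (k + 1) t) t := by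
  have h2 : 0 < t / 2 := by linarith
  have key : HasDerivAt (fun z : ℝ => ∑' n : ℕ, c n ^ k * Real.exp (-c n * z))
      (∑' n : ℕ, c n ^ k * (Real.exp (-c n * t) * -c n)) t := by
    refine myHasDerivAt_tsum (g := fun n z => c n ^ k * Real.exp (-c n * z))
      (g' := fun n z => c n ^ k * (Real.exp (-c n * z) * -c n))
      (u := fun n => c n ^ (k + 1) * Real.exp (-c n * (t / 2)))
      (s := Set.Ioi (t / 2))
      (summable_W (k + 1) h2) isOpen_Ioi isPreconnected_Ioi
      (fun n x _ => ?_) (fun n x hx => ?_)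
      (Set.mem_Ioi.2 (by linarith)) (summable_W k ht) (Set.mem_Ioi.2 (by linarith))
    · have h := (((hasDerivAt_id' (𝕜 := ℝ) x).const_mul (-c n)).exp).const_mul (c n ^ k)
      simpa using h
    · have hx' : t / 2 < x := hx
      show ‖c n ^ k * (Real.exp (-c n * x) * -c n)‖ ≤ c n ^ (k + 1) * Real.exp (-c n * (t / 2))
      have heq : c n ^ k * (Real.exp (-c n * x) * -c n)
          = -(c n ^ (k + 1) * Real.exp (-c n * x)) := by ring
      rw [heq, norm_neg, Real.norm_eq_abs,
        abs_of_pos (mul_pos (pow_pos (c_pos n) _) (Real.exp_pos _))]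
      have hmono : Real.exp (-c n * x) ≤ Real.exp (-c n * (t / 2)) := by
        apply Real.exp_le_exp.2
        have := mul_le_mul_of_nonneg_left hx'.le (c_pos n).le
        nlinarith
      exact mul_le_mul_of_nonneg_left hmono (pow_nonneg (c_pos n).le _)
  have hkey : HasDerivAt (W k) (∑' n : ℕ, c n ^ k * (Real.exp (-c n * t) * -c n)) t := key
  have e2 : ∑' n : ℕ, c n ^ k * (Real.exp (-c n * t) * -c n) = -W (k + 1) t := by
    rw [W, ← tsum_neg]
    exact tsum_congr fun n => by ring
  rwa [e2] at hkey

private lemma hasDerivAt_Winv (k : ℕ) {t : ℝ} (ht : 0 < t) :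
    HasDerivAt (fun s : ℝ => W k s⁻¹) (W (k + 1) t⁻¹ * (t ^ 2)⁻¹) t := by
  have h := (hasDerivAt_W k (inv_pos.2 ht)).comp t (hasDerivAt_inv ht.ne')
  have h2 : HasDerivAt (fun s : ℝ => W k s⁻¹) (-W (k + 1) t⁻¹ * -(t ^ 2)⁻¹) t := by
    simpa [Function.comp_def] using h
  convert h2 using 1
  ring

private lemma hasDerivAt_W0 {t : ℝ} (ht : 0 < t) : HasDerivAt (W 0) (-W 1 t) t :=
  hasDerivAt_W 0 ht

private lemma hasDerivAt_W1 {t : ℝ} (ht : 0 < t) : HasDerivAt (W 1) (-W 2 t) t :=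
  hasDerivAt_W 1 ht

private lemma hasDerivAt_Winv0 {t : ℝ} (ht : 0 < t) :
    HasDerivAt (fun s : ℝ => W 0 s⁻¹) (W 1 t⁻¹ * (t ^ 2)⁻¹) t := hasDerivAt_Winv 0 ht

private lemma hasDerivAt_Winv1 {t : ℝ} (ht : 0 < t) :
    HasDerivAt (fun s : ℝ => W 1 s⁻¹) (W 2 t⁻¹ * (t ^ 2)⁻¹) t := hasDerivAt_Winv 1 ht

/-- the theta sum over ℤ equals `1 + 2 W 0 a`. -/
private lemma int_sum {a : ℝ} (ha : 0 < a) :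
    ∑' n : ℤ, Real.exp (-Real.pi * a * (n : ℝ) ^ 2) = 1 + 2 * W 0 a := by
  have hsum : Summable (fun n : ℕ => Real.exp (-c n * a)) := by
    have := summable_W 0 ha
    simpa using this
  have key : ∀ n : ℕ, Real.exp (-c n * a) = Real.exp (-Real.pi * a * ((n : ℝ) + 1) ^ 2) :=
    fun n => congrArg Real.exp (by simp only [c]; ring)
  have hf1 : Summable (fun n : ℕ => Real.exp (-Real.pi * a * ((n : ℤ) : ℝ) ^ 2)) := by
    rw [← summable_nat_add_iff 1]
    refine hsum.congr fun n => ?_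
    rw [key n]; push_cast; ring_nf
  have hf2 : Summable (fun n : ℕ => Real.exp (-Real.pi * a * ((-((n : ℤ) + 1) : ℤ) : ℝ) ^ 2)) := by
    refine hsum.congr fun n => ?_
    rw [key n]
    congr 1
    push_cast
    ring
  rw [tsum_of_nat_of_neg_add_one (f := fun m : ℤ => Real.exp (-Real.pi * a * (m : ℝ) ^ 2)) hf1 hf2,
    Summable.tsum_eq_zero_add hf1]
  have h0 : Real.exp (-Real.pi * a * (((0 : ℕ) : ℤ) : ℝ) ^ 2) = 1 := by norm_num
  have htail : ∑' n : ℕ, Real.exp (-Real.pi * a * (((n + 1 : ℕ) : ℤ) : ℝ) ^ 2) = W 0 a := by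
    rw [W]
    refine tsum_congr fun n => ?_
    rw [pow_zero, one_mul, key n]
    congr 1
    push_cast
    ring
  have hneg : ∑' n : ℕ, Real.exp (-Real.pi * a * ((-((n : ℤ) + 1) : ℤ) : ℝ) ^ 2) = W 0 a := by
    rw [W]
    refine tsum_congr fun n => ?_
    rw [pow_zero, one_mul, key n]
    congr 1
    push_cast
    ring
  rw [h0, htail, hneg]
  ring

/-- theta functional equation in terms of `W 0`. -/
private lemma funeq {t : ℝ} (ht : 0 < t) :
    1 + 2 * W 0 t = (1 + 2 * W 0 t⁻¹) * (Real.sqrt t)⁻¹ := by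
  have h := Real.tsum_exp_neg_mul_int_sq ht
  have e1 := int_sum ht
  have e2 : ∑' n : ℤ, Real.exp (-Real.pi / t * (n : ℝ) ^ 2) = 1 + 2 * W 0 t⁻¹ := by
    rw [← int_sum (inv_pos.2 ht)]
    exact tsum_congr fun n => congrArg Real.exp (by ring)
  rw [e1, e2] at h
  rw [h, Real.sqrt_eq_rpow]
  ring

private lemma ioi_eventually {t : ℝ} (ht : 0 < t) {f g : ℝ → ℝ}
    (h : ∀ s : ℝ, 0 < s → f s = g s) : f =ᶠ[nhds t] g := by
  filter_upwards [isOpen_Ioi.mem_nhds (Set.mem_Ioi.2 ht)] with s hs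
  exact h s hs

/-- First derivative identity. -/
private lemma I2 {t : ℝ} (ht : 0 < t) :
    W 1 t = (1 + 2 * W 0 t⁻¹) / (4 * (t * Real.sqrt t)) - W 1 t⁻¹ / (t ^ 2 * Real.sqrt t) := by
  have hrt : (0:ℝ) < Real.sqrt t := Real.sqrt_pos.2 ht
  have hA : HasDerivAt (fun s : ℝ => 1 + 2 * W 0 s) (2 * -W 1 t) t :=
    ((hasDerivAt_W0 ht).const_mul 2).const_add 1
  have hu : HasDerivAt (fun s : ℝ => 1 + 2 * W 0 s⁻¹) (2 * (W 1 t⁻¹ * (t ^ 2)⁻¹)) t :=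
    ((hasDerivAt_Winv0 ht).const_mul 2).const_add 1
  have hv : HasDerivAt (fun s : ℝ => (Real.sqrt s)⁻¹)
      (-(1 / (2 * Real.sqrt t)) / Real.sqrt t ^ 2) t :=
    (Real.hasDerivAt_sqrt ht.ne').inv hrt.ne'
  have hB := hu.mul hv
  have heq : (fun s : ℝ => 1 + 2 * W 0 s) =ᶠ[nhds t]
      (fun s : ℝ => (1 + 2 * W 0 s⁻¹) * (Real.sqrt s)⁻¹) :=
    ioi_eventually ht fun s hs => funeq hs
  have huni := hA.unique (hB.congr_of_eventuallyEq heq)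
  -- now algebra
  obtain ⟨r, hr0, rfl⟩ : ∃ r : ℝ, 0 < r ∧ t = r ^ 2 :=
    ⟨Real.sqrt t, Real.sqrt_pos.2 ht, (Real.sq_sqrt ht.le).symm⟩
  have hr' : r ≠ 0 := hr0.ne'
  rw [Real.sqrt_sq hr0.le] at huni ⊢
  have hW1 : W 1 (r ^ 2) = -(1/2) * (2 * (W 1 (r ^ 2)⁻¹ * ((r ^ 2) ^ 2)⁻¹) * r⁻¹
      + (1 + 2 * W 0 (r ^ 2)⁻¹) * (-(1 / (2 * r)) / r ^ 2)) := by linarith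
  rw [hW1]
  field_simp
  ring

/-- the main functional equation for `D t = 2 t W₂ t - 3 W₁ t`. -/
private lemma D_eq {t : ℝ} (ht : 0 < t) :
    2 * t * W 2 t - 3 * W 1 t
      = (Real.sqrt t)⁻¹ * (t ^ 2)⁻¹ * (2 * t⁻¹ * W 2 t⁻¹ - 3 * W 1 t⁻¹) := by
  have hrt : (0:ℝ) < Real.sqrt t := Real.sqrt_pos.2 ht
  have hsq : HasDerivAt Real.sqrt (1 / (2 * Real.sqrt t)) t := Real.hasDerivAt_sqrt ht.ne'
  have hnum1 : HasDerivAt (fun s : ℝ => 1 + 2 * W 0 s⁻¹) (2 * (W 1 t⁻¹ * (t ^ 2)⁻¹)) t :=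
    ((hasDerivAt_Winv0 ht).const_mul 2).const_add 1
  have hden1 : HasDerivAt (fun s : ℝ => 4 * (s * Real.sqrt s))
      (4 * (1 * Real.sqrt t + t * (1 / (2 * Real.sqrt t)))) t :=
    ((hasDerivAt_id' (𝕜 := ℝ) t).mul hsq).const_mul 4
  have hden1ne : 4 * (t * Real.sqrt t) ≠ 0 := by positivity
  have h1 := hnum1.div hden1 hden1ne
  have hnum2 : HasDerivAt (fun s : ℝ => W 1 s⁻¹) (W 2 t⁻¹ * (t ^ 2)⁻¹) t := hasDerivAt_Winv1 ht
  have hden2 : HasDerivAt (fun s : ℝ => s ^ 2 * Real.sqrt s)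
      (((2 : ℕ) : ℝ) * t ^ (2 - 1) * Real.sqrt t + t ^ 2 * (1 / (2 * Real.sqrt t))) t :=
    (hasDerivAt_pow 2 t).mul hsq
  have hden2ne : t ^ 2 * Real.sqrt t ≠ 0 := by positivity
  have h2 := hnum2.div hden2 hden2ne
  have hR2 := h1.sub h2
  have heq : (W 1) =ᶠ[nhds t] (fun s : ℝ =>
      (1 + 2 * W 0 s⁻¹) / (4 * (s * Real.sqrt s)) - W 1 s⁻¹ / (s ^ 2 * Real.sqrt s)) :=
    ioi_eventually ht fun s hs => I2 hs
  have huni := (hasDerivAt_W1 ht).unique (hR2.congr_of_eventuallyEq heq)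
  have hI2 := I2 ht
  obtain ⟨r, hr0, rfl⟩ : ∃ r : ℝ, 0 < r ∧ t = r ^ 2 :=
    ⟨Real.sqrt t, Real.sqrt_pos.2 ht, (Real.sq_sqrt ht.le).symm⟩
  have hr' : r ≠ 0 := hr0.ne'
  rw [Real.sqrt_sq hr0.le] at huni hI2 ⊢
  have hW2 : W 2 (r ^ 2) = -((2 * (W 1 (r ^ 2)⁻¹ * ((r ^ 2) ^ 2)⁻¹) * (4 * (r ^ 2 * r))
        - (1 + 2 * W 0 (r ^ 2)⁻¹) * (4 * (1 * r + r ^ 2 * (1 / (2 * r)))))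
        / (4 * (r ^ 2 * r)) ^ 2
      - (W 2 (r ^ 2)⁻¹ * ((r ^ 2) ^ 2)⁻¹ * ((r ^ 2) ^ 2 * r)
        - W 1 (r ^ 2)⁻¹ * (((2 : ℕ) : ℝ) * (r ^ 2) ^ (2 - 1) * r + (r ^ 2) ^ 2 * (1 / (2 * r))))
        / ((r ^ 2) ^ 2 * r) ^ 2) := by linarith
  rw [hI2, hW2]
  norm_num
  field_simp
  ring

private lemma term_eq (t : ℝ) (n : ℕ) :
    (2 * Real.pi ^ 2 * ((n : ℝ) + 1) ^ 4 * t - 3 * Real.pi * ((n : ℝ) + 1) ^ 2) *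
        Real.exp (-Real.pi * ((n : ℝ) + 1) ^ 2 * t)
      = 2 * t * (c n ^ 2 * Real.exp (-c n * t)) - 3 * (c n ^ 1 * Real.exp (-c n * t)) := by
  have harg : -Real.pi * ((n : ℝ) + 1) ^ 2 * t = -c n * t := by simp only [c]; ring
  rw [harg]
  simp only [c]
  ring

private lemma S_eq {t : ℝ} (ht : 0 < t) :
    (∑' n : ℕ, (2 * Real.pi ^ 2 * ((n : ℝ) + 1) ^ 4 * t - 3 * Real.pi * ((n : ℝ) + 1) ^ 2) *
        Real.exp (-Real.pi * ((n : ℝ) + 1) ^ 2 * t))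
      = 2 * t * W 2 t - 3 * W 1 t := by
  have h2 := (summable_W 2 ht).mul_left (2 * t)
  have h1 := (summable_W 1 ht).mul_left 3
  calc (∑' n : ℕ, (2 * Real.pi ^ 2 * ((n : ℝ) + 1) ^ 4 * t - 3 * Real.pi * ((n : ℝ) + 1) ^ 2) *
          Real.exp (-Real.pi * ((n : ℝ) + 1) ^ 2 * t))
      = ∑' n : ℕ, (2 * t * (c n ^ 2 * Real.exp (-c n * t))
          - 3 * (c n ^ 1 * Real.exp (-c n * t))) := tsum_congr fun n => term_eq t n
    _ = 2 * t * W 2 t - 3 * W 1 t := by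
        rw [Summable.tsum_sub h2 h1, tsum_mul_left, tsum_mul_left, W, W]

private lemma D_pos_of_one_le {t : ℝ} (h1t : 1 ≤ t) : 0 < 2 * t * W 2 t - 3 * W 1 t := by
  have ht : 0 < t := lt_of_lt_of_le one_pos h1t
  have h2 := (summable_W 2 ht).mul_left (2 * t)
  have h1 := (summable_W 1 ht).mul_left 3
  have hsum := h2.sub h1
  have hterm : ∀ n : ℕ, 0 < 2 * t * (c n ^ 2 * Real.exp (-c n * t))
      - 3 * (c n ^ 1 * Real.exp (-c n * t)) := by
    intro n
    have hc := c_ge3 n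
    have hE := Real.exp_pos (-c n * t)
    have hkey : 0 < (2 * t * c n ^ 2 - 3 * c n ^ 1) * Real.exp (-c n * t) := by
      apply mul_pos _ hE
      nlinarith
    calc (0:ℝ) < (2 * t * c n ^ 2 - 3 * c n ^ 1) * Real.exp (-c n * t) := hkey
      _ = 2 * t * (c n ^ 2 * Real.exp (-c n * t)) - 3 * (c n ^ 1 * Real.exp (-c n * t)) := by ring
  have : 0 < ∑' n : ℕ, (2 * t * (c n ^ 2 * Real.exp (-c n * t))
      - 3 * (c n ^ 1 * Real.exp (-c n * t))) :=
    Summable.tsum_pos hsum (fun n => (hterm n).le) 0 (hterm 0)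
  have heq : (∑' n : ℕ, (2 * t * (c n ^ 2 * Real.exp (-c n * t))
      - 3 * (c n ^ 1 * Real.exp (-c n * t)))) = 2 * t * W 2 t - 3 * W 1 t := by
    rw [Summable.tsum_sub h2 h1, tsum_mul_left, tsum_mul_left, W, W]
  rwa [heq] at this

private lemma D_pos {t : ℝ} (ht : 0 < t) : 0 < 2 * t * W 2 t - 3 * W 1 t := by
  rcases le_or_gt 1 t with h | h
  · exact D_pos_of_one_le h
  · rw [D_eq ht]
    have hti : 0 < t⁻¹ := inv_pos.2 ht
    have h1 : (1:ℝ) ≤ t⁻¹ := by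
      nlinarith [mul_pos (sub_pos.2 h) hti, mul_inv_cancel₀ ht.ne']
    exact mul_pos (mul_pos (inv_pos.2 (Real.sqrt_pos.2 ht)) (inv_pos.2 (by positivity)))
      (D_pos_of_one_le h1)

/-- `H(y) = 4y² ∑_{n=1}^∞ (2π²n⁴y² − 3πn²) exp(−πn²y²)`. -/
noncomputable def H (y : ℝ) : ℝ :=
  4 * y ^ 2 * ∑' n : ℕ,
    (2 * Real.pi ^ 2 * ((n : ℝ) + 1) ^ 4 * y ^ 2 - 3 * Real.pi * ((n : ℝ) + 1) ^ 2) *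
      Real.exp (-Real.pi * ((n : ℝ) + 1) ^ 2 * y ^ 2)

/-- `H(y) > 0` for all `y > 0`. -/
theorem H_pos (y : ℝ) (hy : 0 < y) : 0 < H y := by
  have ht : 0 < y ^ 2 := by positivity
  rw [H, S_eq ht]
  exact mul_pos (by positivity) (D_pos ht)
end

section
/- ∫₀^∞ H(y) dy = 1 and ∫₀^∞ y^{−1} H(y) dy = 1; consequently y ↦ y^{−1} H(y) is the density of a probability distribution on (0, ∞) with mean 1. -/
/-!
With `θ(y) = ∑_{n ∈ ℤ} exp(-π n² y²)` one has `H(y) = y² θ''(y) + 2y θ'(y) = (y² θ'(y))'`.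
The theta transformation formula `θ(1/y) = y θ(y)`, differentiated once, gives
`y² θ'(y) = -(θ(1/y) + θ'(1/y)/y)`, which tends to `-1` as `y → 0⁺`; since `y² θ'(y) → 0` at `∞`,
`∫₀^∞ H = 1`. Differentiated twice, it gives `H(1/y) = y H(y)`: the substitution `y ↦ 1/y` turns
`∫₀^∞ y⁻¹ H(y) dy` into `∫₀^∞ H`, and it turns the rapid decay of `H` at `∞` into `H(y) → 0` as
`y → 0⁺`, which gives integrability.
-/

open MeasureTheory

open Real Filter Set Topology Asymptotics

theorem integral_Ioi_of_hasDerivAt_of_tendsto_nhdsGT {f f' : ℝ → ℝ} {a l m : ℝ}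
    (hderiv : ∀ x ∈ Ioi a, HasDerivAt f (f' x) x) (f'int : IntegrableOn f' (Ioi a))
    (hl : Tendsto f (𝓝[>] a) (𝓝 l)) (hm : Tendsto f atTop (𝓝 m)) :
    ∫ x in Ioi a, f' x = m - l := by
  classical
  rw [← Ici_sdiff_left] at hl
  have hderiv' : ∀ x ∈ Ioi a, HasDerivAt (Function.update f a l) (f' x) x := fun x hx =>
    (hderiv x hx).congr_of_eventuallyEq <| by
      filter_upwards [eventually_ne_nhds (ne_of_gt hx)] with y hy
      exact Function.update_of_ne hy l f
  have hm' : Tendsto (Function.update f a l) atTop (𝓝 m) :=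
    hm.congr' <| by
      filter_upwards [eventually_ne_atTop a] with x hx
      exact (Function.update_of_ne hx l f).symm
  simpa using integral_Ioi_of_hasDerivAt_of_tendsto
    (continuousWithinAt_update_same.mpr hl) hderiv' f'int hm'

section InversionSymmetry

variable {f f' f'' : ℝ → ℝ}

theorem sq_mul_deriv_eq_of_inv (hf : ∀ y, 0 < y → HasDerivAt f (f' y) y)
    (hinv : ∀ y, 0 < y → f y⁻¹ = y * f y) {y : ℝ} (hy : 0 < y) :
    y ^ 2 * f' y = -(f y⁻¹ + y⁻¹ * f' y⁻¹) := by
  have hy' : 0 < y⁻¹ := inv_pos.2 hy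
  have hcomp : HasDerivAt (fun x => f x⁻¹) (f' y * -((y⁻¹) ^ 2)⁻¹) y⁻¹ := by
    have := (hf _ (inv_pos.2 hy')).comp y⁻¹ (hasDerivAt_inv hy'.ne')
    rwa [inv_inv] at this
  have heq : (fun x => x * f x) =ᶠ[𝓝 y⁻¹] fun x => f x⁻¹ := by
    filter_upwards [Ioi_mem_nhds hy'] with x hx using (hinv x hx).symm
  have key := (hcomp.congr_of_eventuallyEq heq).unique
    ((hasDerivAt_id' y⁻¹).mul (hf _ hy'))
  field_simp at key ⊢
  linarith

theorem inv_sq_mul_deriv2_add_of_inv (hf : ∀ y, 0 < y → HasDerivAt f (f' y) y)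
    (hf' : ∀ y, 0 < y → HasDerivAt f' (f'' y) y) (hinv : ∀ y, 0 < y → f y⁻¹ = y * f y)
    {y : ℝ} (hy : 0 < y) :
    (y⁻¹) ^ 2 * f'' y⁻¹ + 2 * y⁻¹ * f' y⁻¹ = y * (y ^ 2 * f'' y + 2 * y * f' y) := by
  have hy' : 0 < y⁻¹ := inv_pos.2 hy
  have hrecip := hasDerivAt_inv hy.ne'
  have hrhs : HasDerivAt (fun x => -(f x⁻¹ + x⁻¹ * f' x⁻¹))
      (-(f' y⁻¹ * -(y ^ 2)⁻¹ + (-(y ^ 2)⁻¹ * f' y⁻¹ + y⁻¹ * (f'' y⁻¹ * -(y ^ 2)⁻¹)))) y :=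
    (((hf _ hy').comp y hrecip).add (hrecip.mul ((hf' _ hy').comp y hrecip))).neg
  have heq : (fun x => -(f x⁻¹ + x⁻¹ * f' x⁻¹)) =ᶠ[𝓝 y] fun x => x ^ 2 * f' x := by
    filter_upwards [Ioi_mem_nhds hy] with x hx using (sq_mul_deriv_eq_of_inv hf hinv hx).symm
  have key := (hrhs.congr_of_eventuallyEq heq.symm).unique
    ((hasDerivAt_pow 2 y).mul (hf' y hy))
  field_simp at key ⊢
  linear_combination key

theorem integral_Ioi_inv_mul_eq_of_inv (hinv : ∀ y, 0 < y → f y⁻¹ = y * f y) :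
    ∫ y in Ioi 0, y⁻¹ * f y = ∫ y in Ioi 0, f y := by
  rw [← integral_comp_rpow_Ioi f (p := -1) (by norm_num)]
  refine setIntegral_congr_fun measurableSet_Ioi fun y hy => ?_
  rw [rpow_neg_one, hinv y hy, smul_eq_mul, abs_neg, abs_one, one_mul,
    show (-1 : ℝ) - 1 = -2 by norm_num, rpow_neg hy.le, rpow_two]
  field_simp

end InversionSymmetry

noncomputable def thetaSum (k : ℕ) (t : ℝ) : ℝ :=
  ∑' n : ℕ, ((n : ℝ) + 1) ^ k * exp (-π * ((n : ℝ) + 1) ^ 2 * t)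

theorem summable_thetaSum (k : ℕ) {t : ℝ} (ht : 0 < t) :
    Summable fun n : ℕ => ((n : ℝ) + 1) ^ k * exp (-π * ((n : ℝ) + 1) ^ 2 * t) := by
  have hr : ‖exp (-π * t)‖ < 1 := by
    rw [norm_of_nonneg (exp_nonneg _), exp_lt_one_iff]
    nlinarith [pi_pos]
  have hgeom : Summable fun n : ℕ => ((n + 1 : ℕ) : ℝ) ^ k * exp (-π * t) ^ (n + 1) :=
    (summable_pow_mul_geometric_of_norm_lt_one k hr).comp_injective (add_left_injective 1)
  refine hgeom.of_nonneg_of_le (fun n => by positivity) fun n => ?_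
  push_cast
  gcongr
  rw [← exp_nat_mul, exp_le_exp]
  push_cast
  have hn : (0 : ℝ) ≤ n := n.cast_nonneg
  nlinarith [mul_nonneg (mul_pos pi_pos ht).le (by nlinarith : (0 : ℝ) ≤ (n + 1) ^ 2 - (n + 1))]

theorem thetaSum_nonneg (k : ℕ) (t : ℝ) : 0 ≤ thetaSum k t :=
  tsum_nonneg fun _ => by positivity

theorem hasDerivAt_thetaSum (k : ℕ) {t : ℝ} (ht : 0 < t) :
    HasDerivAt (thetaSum k) (-π * thetaSum (k + 2) t) t := by
  have hmem : t ∈ Ioi (t / 2) := half_lt_self ht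
  have h := hasDerivAt_tsum_of_isPreconnected
    (g := fun (n : ℕ) (z : ℝ) => ((n : ℝ) + 1) ^ k * exp (-π * ((n : ℝ) + 1) ^ 2 * z))
    (g' := fun (n : ℕ) (z : ℝ) => -π * (((n : ℝ) + 1) ^ (k + 2) * exp (-π * ((n : ℝ) + 1) ^ 2 * z)))
    ((summable_thetaSum (k + 2) (half_pos ht)).mul_left π) isOpen_Ioi isPreconnected_Ioi
    (fun n z _ => ?_) (fun n z hz => ?_) hmem (summable_thetaSum k ht) hmem
  · rwa [tsum_mul_left] at h
  · refine (((hasDerivAt_id' z).const_mul (-π * ((n : ℝ) + 1) ^ 2)).exp.const_mul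
      (((n : ℝ) + 1) ^ k)).congr_deriv ?_
    ring
  · rw [norm_mul, norm_neg, norm_of_nonneg pi_pos.le, norm_of_nonneg (by positivity)]
    gcongr π * (_ * exp ?_)
    nlinarith [mul_nonneg (mul_nonneg pi_pos.le (sq_nonneg ((n : ℝ) + 1)))
      (sub_nonneg.2 (le_of_lt (mem_Ioi.1 hz)))]

theorem hasDerivAt_thetaSum_sq (k : ℕ) {y : ℝ} (hy : y ≠ 0) :
    HasDerivAt (fun x => thetaSum k (x ^ 2)) (-2 * π * y * thetaSum (k + 2) (y ^ 2)) y := by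
  refine ((hasDerivAt_thetaSum k (by positivity)).comp y (hasDerivAt_pow 2 y)).congr_deriv ?_
  ring

theorem thetaSum_le (k : ℕ) {t : ℝ} (ht : 1 ≤ t) :
    thetaSum k t ≤ exp π * thetaSum k 1 * exp (-π * t) := by
  calc thetaSum k t ≤ ∑' n : ℕ, ((n : ℝ) + 1) ^ k * exp (-π * ((n : ℝ) + 1) ^ 2 * 1) *
        (exp π * exp (-π * t)) :=
      (summable_thetaSum k (by linarith)).tsum_le_tsum (fun n => ?_)
        ((summable_thetaSum k one_pos).mul_right _)
    _ = exp π * thetaSum k 1 * exp (-π * t) := by rw [tsum_mul_right, thetaSum]; ring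
  rw [← exp_add, mul_assoc (((n : ℝ) + 1) ^ k), ← exp_add]
  gcongr
  have hn : (1 : ℝ) ≤ ((n : ℝ) + 1) ^ 2 := by nlinarith [(n.cast_nonneg : (0 : ℝ) ≤ n)]
  nlinarith [mul_nonneg (mul_nonneg pi_pos.le (sub_nonneg.2 hn)) (sub_nonneg.2 ht)]

theorem isBigO_thetaSum (k : ℕ) : thetaSum k =O[atTop] fun t => exp (-π * t) := by
  refine IsBigO.of_bound (exp π * thetaSum k 1) ?_
  filter_upwards [eventually_ge_atTop 1] with t ht
  rw [norm_of_nonneg (thetaSum_nonneg k t), norm_of_nonneg (exp_nonneg _)]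
  exact thetaSum_le k ht

theorem isBigO_pow_mul_thetaSum_sq (j k : ℕ) :
    (fun y : ℝ => y ^ j * thetaSum k (y ^ 2)) =O[atTop] fun y => exp (-y) := by
  have hsq : (fun y : ℝ => y ^ j * thetaSum k (y ^ 2)) =O[atTop]
      fun y => y ^ j * exp (-π * y ^ 2) :=
    (isBigO_refl _ _).mul ((isBigO_thetaSum k).comp_tendsto (tendsto_pow_atTop two_ne_zero))
  refine hsq.trans (IsBigO.of_bound 1 ?_)
  filter_upwards [eventually_ge_atTop 1,
    (tendsto_pow_mul_exp_neg_atTop_nhds_zero j).eventually (eventually_le_nhds one_pos)]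
    with y hy hbound
  rw [one_mul, norm_of_nonneg (exp_nonneg _), norm_of_nonneg (by positivity)]
  calc y ^ j * exp (-π * y ^ 2) ≤ y ^ j * (exp (-y) * exp (-y)) := by
        rw [← exp_add]
        gcongr
        nlinarith [pi_gt_three]
    _ = y ^ j * exp (-y) * exp (-y) := by ring
    _ ≤ exp (-y) := mul_le_of_le_one_left (exp_nonneg _) hbound

theorem tendsto_pow_mul_thetaSum_sq (j k : ℕ) :
    Tendsto (fun y : ℝ => y ^ j * thetaSum k (y ^ 2)) atTop (𝓝 0) :=
  (isBigO_pow_mul_thetaSum_sq j k).trans_tendsto tendsto_exp_neg_atTop_nhds_zero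

theorem tsum_int_exp_neg_pi_mul_sq {a : ℝ} (ha : 0 < a) :
    ∑' n : ℤ, exp (-π * a * (n : ℝ) ^ 2) = 1 + 2 * thetaSum 0 a := by
  have hterm : ∀ n : ℕ, exp (-π * a * (((n : ℤ) + 1 : ℤ) : ℝ) ^ 2) =
      ((n : ℝ) + 1) ^ 0 * exp (-π * ((n : ℝ) + 1) ^ 2 * a) := fun n => by
    push_cast; ring_nf
  have hterm' : ∀ n : ℕ, exp (-π * a * ((-((n : ℤ) + 1) : ℤ) : ℝ) ^ 2) =
      ((n : ℝ) + 1) ^ 0 * exp (-π * ((n : ℝ) + 1) ^ 2 * a) := fun n => by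
    push_cast; ring_nf
  have hs := summable_thetaSum 0 ha
  rw [tsum_of_add_one_of_neg_add_one (by simpa only [hterm] using hs)
    (by simpa only [hterm'] using hs)]
  simp only [hterm, hterm', thetaSum, Int.cast_zero, zero_pow two_ne_zero, mul_zero, exp_zero]
  ring

/-- `theta y = ∑_{n ∈ ℤ} exp(-π n² y²)` (see `tsum_int_exp_neg_pi_mul_sq`); `thetaDeriv` and
`thetaDeriv2` are its first two derivatives. -/
noncomputable def theta (y : ℝ) : ℝ := 1 + 2 * thetaSum 0 (y ^ 2)

noncomputable def thetaDeriv (y : ℝ) : ℝ := -4 * π * y * thetaSum 2 (y ^ 2)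

noncomputable def thetaDeriv2 (y : ℝ) : ℝ :=
  8 * π ^ 2 * y ^ 2 * thetaSum 4 (y ^ 2) - 4 * π * thetaSum 2 (y ^ 2)

theorem theta_inv {y : ℝ} (hy : 0 < y) : theta y⁻¹ = y * theta y := by
  have h := tsum_exp_neg_mul_int_sq (pow_pos hy 2)
  rw [tsum_int_exp_neg_pi_mul_sq (pow_pos hy 2), ← sqrt_eq_rpow, sqrt_sq hy.le,
    div_eq_mul_inv (-π), ← inv_pow, tsum_int_exp_neg_pi_mul_sq (by positivity)] at h
  rw [theta, theta, h]
  field_simp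

theorem hasDerivAt_theta {y : ℝ} (hy : y ≠ 0) : HasDerivAt theta (thetaDeriv y) y := by
  refine ((hasDerivAt_thetaSum_sq 0 hy).const_mul 2).const_add 1 |>.congr_deriv ?_
  rw [thetaDeriv]
  ring

theorem hasDerivAt_thetaDeriv {y : ℝ} (hy : y ≠ 0) :
    HasDerivAt thetaDeriv (thetaDeriv2 y) y := by
  refine ((hasDerivAt_id' y).const_mul (-4 * π)).mul (hasDerivAt_thetaSum_sq 2 hy)
    |>.congr_deriv ?_
  rw [thetaDeriv2]
  ring

theorem H_eq_thetaSum {y : ℝ} (hy : 0 < y) :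
    H y = 8 * π ^ 2 * y ^ 4 * thetaSum 4 (y ^ 2) - 12 * π * y ^ 2 * thetaSum 2 (y ^ 2) := by
  have ht : 0 < y ^ 2 := by positivity
  rw [H, thetaSum, thetaSum, ← tsum_mul_left (a := 8 * π ^ 2 * y ^ 4),
    ← tsum_mul_left (a := 12 * π * y ^ 2),
    ← ((summable_thetaSum 4 ht).mul_left _).tsum_sub ((summable_thetaSum 2 ht).mul_left _),
    ← tsum_mul_left]
  congr 1 with n
  ring

theorem H_eq_theta {y : ℝ} (hy : 0 < y) :
    H y = y ^ 2 * thetaDeriv2 y + 2 * y * thetaDeriv y := by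
  rw [H_eq_thetaSum hy, thetaDeriv2, thetaDeriv]
  ring

theorem H_inv {y : ℝ} (hy : 0 < y) : H y⁻¹ = y * H y := by
  rw [H_eq_theta hy, H_eq_theta (inv_pos.2 hy)]
  exact inv_sq_mul_deriv2_add_of_inv (fun x hx => hasDerivAt_theta hx.ne')
    (fun x hx => hasDerivAt_thetaDeriv hx.ne') (fun x hx => theta_inv hx) hy

theorem hasDerivAt_sq_mul_thetaDeriv {y : ℝ} (hy : 0 < y) :
    HasDerivAt (fun x => x ^ 2 * thetaDeriv x) (H y) y := by
  rw [H_eq_theta hy]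
  refine ((hasDerivAt_pow 2 y).mul (hasDerivAt_thetaDeriv hy.ne')).congr_deriv ?_
  ring

theorem tendsto_sq_mul_thetaDeriv_atTop :
    Tendsto (fun y => y ^ 2 * thetaDeriv y) atTop (𝓝 0) := by
  have h := (tendsto_pow_mul_thetaSum_sq 3 2).const_mul (-4 * π)
  rw [mul_zero] at h
  refine h.congr fun y => ?_
  rw [thetaDeriv]
  ring

theorem tendsto_sq_mul_thetaDeriv_nhdsGT_zero :
    Tendsto (fun y => y ^ 2 * thetaDeriv y) (𝓝[>] 0) (𝓝 (-1)) := by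
  have hlim : Tendsto (fun u => theta u + u * thetaDeriv u) atTop (𝓝 1) := by
    have h := ((tendsto_pow_mul_thetaSum_sq 0 0).const_mul 2).const_add 1 |>.add
      ((tendsto_pow_mul_thetaSum_sq 2 2).const_mul (-4 * π))
    rw [mul_zero, mul_zero, add_zero, add_zero] at h
    refine h.congr fun u => ?_
    rw [theta, thetaDeriv]
    ring
  refine (hlim.comp tendsto_inv_nhdsGT_zero).neg.congr' ?_
  filter_upwards [self_mem_nhdsWithin] with y hy
  exact (sq_mul_deriv_eq_of_inv (fun x hx => hasDerivAt_theta hx.ne')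
    (fun x hx => theta_inv hx) hy).symm

theorem isBigO_H : H =O[atTop] fun y => exp (-1 * y) := by
  simp only [neg_one_mul]
  refine (((isBigO_pow_mul_thetaSum_sq 4 4).const_mul_left (8 * π ^ 2)).sub
    ((isBigO_pow_mul_thetaSum_sq 2 2).const_mul_left (12 * π))).congr' ?_ EventuallyEq.rfl
  filter_upwards [eventually_gt_atTop 0] with y hy
  rw [H_eq_thetaSum hy]
  ring

theorem tendsto_H_nhdsGT_zero : Tendsto H (𝓝[>] 0) (𝓝 0) := by
  have hlim : Tendsto (fun u => u * H u) atTop (𝓝 0) := by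
    have h := ((tendsto_pow_mul_thetaSum_sq 5 4).const_mul (8 * π ^ 2)).sub
      ((tendsto_pow_mul_thetaSum_sq 3 2).const_mul (12 * π))
    rw [mul_zero, mul_zero, sub_zero] at h
    refine h.congr' ?_
    filter_upwards [eventually_gt_atTop 0] with u hu
    rw [H_eq_thetaSum hu]
    ring
  refine (hlim.comp tendsto_inv_nhdsGT_zero).congr' ?_
  filter_upwards [self_mem_nhdsWithin] with y hy
  simpa using (H_inv (inv_pos.2 hy)).symm

theorem continuousOn_H : ContinuousOn H (Ici 0) := by
  intro y hy
  rcases (mem_Ici.1 hy).eq_or_lt with rfl | hy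
  · refine continuousWithinAt_Ioi_iff_Ici.1 ?_
    simpa [ContinuousWithinAt, H] using tendsto_H_nhdsGT_zero
  · have h4 := (hasDerivAt_thetaSum_sq 4 hy.ne').continuousAt
    have h2 := (hasDerivAt_thetaSum_sq 2 hy.ne').continuousAt
    have hcont : ContinuousAt
        (fun x => 8 * π ^ 2 * x ^ 4 * thetaSum 4 (x ^ 2) - 12 * π * x ^ 2 * thetaSum 2 (x ^ 2))
        y := by fun_prop
    refine (hcont.congr ?_).continuousWithinAt
    filter_upwards [Ioi_mem_nhds hy] with x hx
    exact (H_eq_thetaSum hx).symm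

theorem integrableOn_H : IntegrableOn H (Ioi 0) :=
  integrable_of_isBigO_exp_neg one_pos continuousOn_H isBigO_H

/-- `∫₀^∞ H(y) dy = 1` and `∫₀^∞ y⁻¹ H(y) dy = 1`: thus `y ↦ y⁻¹H(y)` is a probability
density on `(0,∞)` with mean `1`. -/
theorem H_density_integrals :
    (∫ y in Set.Ioi (0 : ℝ), H y = 1) ∧ (∫ y in Set.Ioi (0 : ℝ), y⁻¹ * H y = 1) := by
  have hmass : ∫ y in Ioi (0 : ℝ), H y = 1 := by
    rw [integral_Ioi_of_hasDerivAt_of_tendsto_nhdsGT (fun y hy => hasDerivAt_sq_mul_thetaDeriv hy)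
      integrableOn_H tendsto_sq_mul_thetaDeriv_nhdsGT_zero tendsto_sq_mul_thetaDeriv_atTop]
    norm_num
  exact ⟨hmass, (integral_Ioi_inv_mul_eq_of_inv fun y hy => H_inv hy).trans hmass⟩
end
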